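/- arXiv:2406.05045 — 4 statements merged into one kernel-verified Lean document; each statement's English description precedes it below -/
import Mathlib

section
/- Assume n ≤ d and let σ : ℝ → ℝ be real analytic and invertible (bijective). Then for every R < R_typ-max(n,d,n), the inclusion H_CPBIRNN(R,n) ⊊ H_CPBIRNN(R+1,n) is strict (both sides taken with the same d and the same σ). -/
open Matrix MeasureTheory

noncomputable section

/-- The CP tensor `[[A,B,C]]`. -/
def cpT {d1 d2 d3 R : ℕ} (A : Matrix (Fin d1) (Fin R) ℝ) (B : Matrix (Fin d2) (Fin R) ℝ)
    (C : Matrix (Fin d3) (Fin R) ℝ) : Fin d1 → Fin d2 → Fin d3 → ℝ :=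
  fun i j k => ∑ r, A i r * B j r * C k r

/-- `(T ×₁ u ×₂ v)` for a third order tensor `T`. -/
def modeProd {d1 d2 d3 : ℕ} (T : Fin d1 → Fin d2 → Fin d3 → ℝ) (u : Fin d1 → ℝ)
    (v : Fin d2 → ℝ) : Fin d3 → ℝ :=
  fun k => ∑ i, ∑ j, T i j k * u i * v j

/-- The CP rank of a tensor: the minimal `R` admitting a rank-`R` CP decomposition. -/
def cprank {d1 d2 d3 : ℕ} (T : Fin d1 → Fin d2 → Fin d3 → ℝ) : ℕ :=
  sInf {R : ℕ | ∃ (A : Matrix (Fin d1) (Fin R) ℝ) (B : Matrix (Fin d2) (Fin R) ℝ)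
    (C : Matrix (Fin d3) (Fin R) ℝ), T = cpT A B C}

/-- The maximal CP rank of tensors in `ℝ^{d1×d2×d3}`. -/
def Rmax (d1 d2 d3 : ℕ) : ℕ :=
  sSup {r : ℕ | ∃ T : Fin d1 → Fin d2 → Fin d3 → ℝ, cprank T = r}

/-- `R` is a typical rank if the set of tensors of CP rank `R` has positive Lebesgue measure. -/
def IsTypicalRank (d1 d2 d3 R : ℕ) : Prop :=
  0 < volume {T : Fin d1 → Fin d2 → Fin d3 → ℝ | cprank T = R}

/-- The maximal typical CP rank. -/
def RtypMax (d1 d2 d3 : ℕ) : ℕ := sSup {R : ℕ | IsTypicalRank d1 d2 d3 R}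

/-- Hidden states of a CPRNN; `x t` is the input at time `t+1`. -/
def cprnnStates {n d R : ℕ} (σ : ℝ → ℝ) (h0 : Fin n → ℝ)
    (A : Matrix (Fin n) (Fin R) ℝ) (B : Matrix (Fin d) (Fin R) ℝ) (C : Matrix (Fin n) (Fin R) ℝ)
    (U : Matrix (Fin n) (Fin d) ℝ) (V : Matrix (Fin n) (Fin n) ℝ) (b : Fin n → ℝ)
    (x : ℕ → Fin d → ℝ) : ℕ → Fin n → ℝ
  | 0 => h0
  | t + 1 => fun k =>
      σ (modeProd (cpT A B C) (cprnnStates σ h0 A B C U V b x t) (x t) k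
        + V.mulVec (cprnnStates σ h0 A B C U V b x t) k + U.mulVec (x t) k + b k)

/-- Hidden states of a CPBIRNN (second-order term only). -/
def cpbirnnStates {n d R : ℕ} (σ : ℝ → ℝ) (h0 : Fin n → ℝ)
    (A : Matrix (Fin n) (Fin R) ℝ) (B : Matrix (Fin d) (Fin R) ℝ) (C : Matrix (Fin n) (Fin R) ℝ)
    (x : ℕ → Fin d → ℝ) : ℕ → Fin n → ℝ
  | 0 => h0
  | t + 1 => fun k =>
      σ (modeProd (cpT A B C) (cpbirnnStates σ h0 A B C x t) (x t) k)

/-- Hidden states of a 2RNN with arbitrary second-order tensor. -/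
def rnn2States {n d : ℕ} (σ : ℝ → ℝ) (h0 : Fin n → ℝ) (T : Fin n → Fin d → Fin n → ℝ)
    (U : Matrix (Fin n) (Fin d) ℝ) (V : Matrix (Fin n) (Fin n) ℝ) (b : Fin n → ℝ)
    (x : ℕ → Fin d → ℝ) : ℕ → Fin n → ℝ
  | 0 => h0
  | t + 1 => fun k =>
      σ (modeProd T (rnn2States σ h0 T U V b x t) (x t) k
        + V.mulVec (rnn2States σ h0 T U V b x t) k + U.mulVec (x t) k + b k)

/-- Hidden states of a MIRNN. -/
def mirnnStates {n d : ℕ} (σ : ℝ → ℝ) (h0 α β1 β2 b : Fin n → ℝ)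
    (U : Matrix (Fin n) (Fin d) ℝ) (V : Matrix (Fin n) (Fin n) ℝ)
    (x : ℕ → Fin d → ℝ) : ℕ → Fin n → ℝ
  | 0 => h0
  | t + 1 => fun k =>
      σ (α k * V.mulVec (mirnnStates σ h0 α β1 β2 b U V x t) k * U.mulVec (x t) k
        + β1 k * V.mulVec (mirnnStates σ h0 α β1 β2 b U V x t) k
        + β2 k * U.mulVec (x t) k + b k)

/-- The class of functions computed by CPRNNs of rank `R` and hidden size `n`
(mapping the input sequence `x¹,x²,…` to the hidden state sequence `h¹,h²,…`). -/
def HCPRNN (d n R : ℕ) (σ : ℝ → ℝ) : Set ((ℕ → Fin d → ℝ) → ℕ → Fin n → ℝ) :=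
  {h | ∃ (h0 : Fin n → ℝ) (A : Matrix (Fin n) (Fin R) ℝ) (B : Matrix (Fin d) (Fin R) ℝ)
      (C : Matrix (Fin n) (Fin R) ℝ) (U : Matrix (Fin n) (Fin d) ℝ)
      (V : Matrix (Fin n) (Fin n) ℝ) (b : Fin n → ℝ),
      ∀ x t, h x t = cprnnStates σ h0 A B C U V b x (t + 1)}

/-- The class of functions computed by CPBIRNNs of rank `R` and hidden size `n`. -/
def HCPBIRNN (d n R : ℕ) (σ : ℝ → ℝ) : Set ((ℕ → Fin d → ℝ) → ℕ → Fin n → ℝ) :=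
  {h | ∃ (h0 : Fin n → ℝ) (A : Matrix (Fin n) (Fin R) ℝ) (B : Matrix (Fin d) (Fin R) ℝ)
      (C : Matrix (Fin n) (Fin R) ℝ),
      ∀ x t, h x t = cpbirnnStates σ h0 A B C x (t + 1)}

/-- The class of functions computed by 2RNNs of hidden size `n`. -/
def H2RNN (d n : ℕ) (σ : ℝ → ℝ) : Set ((ℕ → Fin d → ℝ) → ℕ → Fin n → ℝ) :=
  {h | ∃ (h0 : Fin n → ℝ) (T : Fin n → Fin d → Fin n → ℝ) (U : Matrix (Fin n) (Fin d) ℝ)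
      (V : Matrix (Fin n) (Fin n) ℝ) (b : Fin n → ℝ),
      ∀ x t, h x t = rnn2States σ h0 T U V b x (t + 1)}

/-- The class of functions computed by MIRNNs of hidden size `n`. -/
def HMIRNN (d n : ℕ) (σ : ℝ → ℝ) : Set ((ℕ → Fin d → ℝ) → ℕ → Fin n → ℝ) :=
  {h | ∃ (h0 α β1 β2 b : Fin n → ℝ) (U : Matrix (Fin n) (Fin d) ℝ)
      (V : Matrix (Fin n) (Fin n) ℝ),
      ∀ x t, h x t = mirnnStates σ h0 α β1 β2 b U V x (t + 1)}

/-- The class `L(n,q) ∘ H_CPBIRNN(R,n)`: CPBIRNNs composed with a linear output map. -/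
def LHCPBIRNN (d n q R : ℕ) (σ : ℝ → ℝ) : Set ((ℕ → Fin d → ℝ) → ℕ → Fin q → ℝ) :=
  {f | ∃ (ℓ : (Fin n → ℝ) →ₗ[ℝ] (Fin q → ℝ)) (h : (ℕ → Fin d → ℝ) → ℕ → Fin n → ℝ),
      h ∈ HCPBIRNN d n R σ ∧ ∀ x t, f x t = ℓ (h x t)}

end

/-!
Let `M = R_typ-max(n,d,n)` and `m = min (R + 1) n`. Tensors whose slice `T i₀` has a singular
leading `m × m` block form a null set (every line in a suitable direction meets it in finitely
many points), so some `T = ∑_{r < M} aᵣ ⊗ bᵣ ⊗ cᵣ` of CP rank `M` avoids it. Since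
`∑_{x ∈ W} det (∑_{r ∈ W \ {x}} uᵣ vᵣᵀ) = (#W - m) det (∑_{r ∈ W} uᵣ vᵣᵀ)`, terms can be
dropped one at a time down to a partial sum `T'` of `R + 1` terms whose slice still has rank
`≥ m`; `T'` has no `R`-term decomposition, as `T` has none with fewer than `M` terms.

Run the CPBIRNN of tensor `T'` from `h⁰ = e i₀`. A rank-`R` CPBIRNN with the same first hidden
states has `T' i₀ = B' diag(A'ᵀ h⁰') C'ᵀ`, of rank `≤ R`, which rules out `R + 1 ≤ n`. If
`n ≤ R + 1`, the slice has full rank `n`, so (σ being bijective) the first hidden state can be any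
vector, and the second step forces both networks to have the same tensor.
-/

namespace Matrix

open Finset

variable {K ι n : Type*} [Fintype n]

theorem finite_setOf_det_smul_one_add_eq_zero [Field K] [DecidableEq n] (M : Matrix n n K) :
    {t : K | (t • 1 + M).det = 0}.Finite := by
  refine (finite_spectrum (-M)).subset fun t ht => ?_
  rw [spectrum.mem_iff, Algebra.algebraMap_eq_smul_one, sub_neg_eq_add,
    isUnit_iff_isUnit_det, isUnit_iff_ne_zero, not_not]
  exact ht

theorem det_sum_vecMulVec [CommRing K] [DecidableEq n] [DecidableEq ι] (u v : ι → n → K)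
    (W : Finset ι) :
    (∑ r ∈ W, vecMulVec (u r) (v r)).det =
      ∑ φ ∈ (Fintype.piFinset fun _ : n => W).filter Function.Injective,
        (∏ j, u (φ j) j) * (of fun j => v (φ j)).det := by
  have hrows : ∑ r ∈ W, vecMulVec (u r) (v r) = fun j => ∑ r ∈ W, u r j • v r := by
    ext j k
    simp [sum_apply, vecMulVec_apply]
  have hexpand : (∑ r ∈ W, vecMulVec (u r) (v r)).det =
      ∑ φ ∈ Fintype.piFinset fun _ : n => W,
        (∏ j, u (φ j) j) * (of fun j => v (φ j)).det := by
    rw [hrows]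
    change detRowAlternating.toMultilinearMap (fun j => ∑ r ∈ W, u r j • v r) = _
    rw [MultilinearMap.map_sum_finset]
    refine Finset.sum_congr rfl fun φ _ => ?_
    rw [MultilinearMap.map_smul_univ, smul_eq_mul]
    rfl
  rw [hexpand, Finset.sum_filter_of_ne]
  intro φ _ hφ
  by_contra hninj
  obtain ⟨i, j, hij, hne⟩ := Function.not_injective_iff.mp hninj
  exact hφ (by rw [det_zero_of_row_eq hne (congrArg v hij), mul_zero])

theorem sum_det_sum_erase_vecMulVec [CommRing K] [DecidableEq n] [DecidableEq ι]
    (u v : ι → n → K) (W : Finset ι) :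
    ∑ x ∈ W, (∑ r ∈ W.erase x, vecMulVec (u r) (v r)).det =
      (W.card - Fintype.card n) • (∑ r ∈ W, vecMulVec (u r) (v r)).det := by
  simp only [det_sum_vecMulVec]
  -- each injective `φ : n → W` is counted once for every `x ∈ W` outside its range
  rw [Finset.sum_comm' (t' := (Fintype.piFinset fun _ : n => W).filter Function.Injective)
    (s' := fun φ => W \ univ.image φ), Finset.smul_sum]
  · refine sum_congr rfl fun φ hφ => ?_
    rw [Finset.mem_filter, Fintype.mem_piFinset] at hφ
    rw [sum_const, card_sdiff_of_subset (by simpa [Finset.image_subset_iff] using hφ.1),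
      card_image_of_injective _ hφ.2, card_univ]
  · intro x φ
    simp only [mem_filter, Fintype.mem_piFinset, mem_erase, mem_sdiff, mem_image, mem_univ,
      true_and, not_exists]
    constructor
    · rintro ⟨hx, hφ, hinj⟩
      exact ⟨⟨hx, fun j => (hφ j).1⟩, fun j => (hφ j).2, hinj⟩
    · rintro ⟨⟨hx, hφx⟩, hφ, hinj⟩
      exact ⟨hx, fun j => ⟨hφx j, hφ j⟩, hinj⟩

theorem exists_subset_card_det_sum_vecMulVec_ne_zero [Field K] [CharZero K] [DecidableEq n]
    [DecidableEq ι] (u v : ι → n → K) {W : Finset ι}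
    (hW : (∑ r ∈ W, vecMulVec (u r) (v r)).det ≠ 0) {s : ℕ}
    (hs : Fintype.card n ≤ s) (hsW : s ≤ W.card) :
    ∃ S ⊆ W, S.card = s ∧ (∑ r ∈ S, vecMulVec (u r) (v r)).det ≠ 0 := by
  obtain ⟨k, hk⟩ := Nat.exists_eq_add_of_le hsW
  induction k generalizing W with
  | zero => exact ⟨W, subset_rfl, by omega, hW⟩
  | succ k ih =>
    have hsum : ∑ x ∈ W, (∑ r ∈ W.erase x, vecMulVec (u r) (v r)).det ≠ 0 := by
      rw [sum_det_sum_erase_vecMulVec]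
      exact smul_ne_zero (by omega) hW
    obtain ⟨x, hx, hxW⟩ := exists_ne_zero_of_sum_ne_zero hsum
    obtain ⟨S, hSW, hS⟩ := ih hxW (by rw [card_erase_of_mem hx]; omega)
      (by rw [card_erase_of_mem hx]; omega)
    exact ⟨S, hSW.trans (erase_subset x W), hS⟩

theorem le_rank_of_det_submatrix_ne_zero {m : Type*} [Field K] {k : ℕ} (M : Matrix m n K)
    (e : Fin k → m) (f : Fin k → n) (h : (M.submatrix e f).det ≠ 0) : k ≤ M.rank := by
  calc k = (M.submatrix e f).rank := by
        rw [rank_of_isUnit _ ((isUnit_iff_isUnit_det _).mpr h.isUnit),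
          Fintype.card_fin]
    _ ≤ M.rank := M.rank_submatrix_le e f

theorem vecMul_surjective_of_rank_eq {m : Type*} [Field K] [Fintype m]
    (M : Matrix m n K) (h : M.rank = Fintype.card n) : Function.Surjective fun x => x ᵥ* M := by
  have hrange : LinearMap.range Mᵀ.mulVecLin = ⊤ := Submodule.eq_top_of_finrank_eq <| by
    rw [← rank, rank_transpose, h, Module.finrank_fintype_fun_eq_card]
  intro y
  obtain ⟨x, hx⟩ := LinearMap.range_eq_top.mp hrange y
  exact ⟨x, by rwa [mulVecLin_apply, mulVec_transpose] at hx⟩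

end Matrix

theorem measure_eq_zero_of_forall_line_null {E : Type*} [NormedAddCommGroup E] [NormedSpace ℝ E]
    [MeasurableSpace E] [BorelSpace E] [SecondCountableTopology E] {μ : Measure E} [SFinite μ]
    [μ.IsAddLeftInvariant] {s : Set E} (hs : MeasurableSet s) (v : E)
    (h : ∀ x, volume {t : ℝ | t • v + x ∈ s} = 0) : μ s = 0 := by
  -- Fubini for `{(t, x) | t • v + x ∈ s}` under `volume|[0,1] × μ`, in both orders
  set ν := volume.restrict (Set.Icc (0 : ℝ) 1)
  have hmeas : MeasurableSet {p : ℝ × E | p.1 • v + p.2 ∈ s} := hs.preimage (by fun_prop)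
  have hslices_x : ν.prod μ {p : ℝ × E | p.1 • v + p.2 ∈ s} = μ s := by
    rw [Measure.prod_apply hmeas]
    have (t : ℝ) : μ {x | t • v + x ∈ s} = μ s := measure_preimage_add μ (t • v) s
    simp [this, ν, Real.volume_Icc]
  have hslices_t : ν.prod μ {p : ℝ × E | p.1 • v + p.2 ∈ s} = 0 := by
    rw [Measure.prod_apply_symm hmeas]
    exact lintegral_eq_zero_of_ae_eq_zero (Filter.Eventually.of_forall fun x =>
      nonpos_iff_eq_zero.mp ((Measure.restrict_apply_le _ _).trans_eq (h x)))
  rw [← hslices_x, hslices_t]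

theorem volume_det_slice_block_eq_zero {d1 d2 d3 m : ℕ} (i₀ : Fin d1) (h2 : m ≤ d2)
    (h3 : m ≤ d3) :
    volume {T : Fin d1 → Fin d2 → Fin d3 → ℝ |
      ((of (T i₀)).submatrix (Fin.castLE h2) (Fin.castLE h3)).det = 0} = 0 := by
  have : (volume : Measure (Fin d1 → Fin d2 → Fin d3 → ℝ)).IsAddLeftInvariant :=
    MeasureTheory.Pi.isAddLeftInvariant_volume
  set block : (Fin d1 → Fin d2 → Fin d3 → ℝ) → Matrix (Fin m) (Fin m) ℝ :=
    fun T => (of (T i₀)).submatrix (Fin.castLE h2) (Fin.castLE h3)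
  have hblock : Continuous block := by fun_prop
  set v : Fin d1 → Fin d2 → Fin d3 → ℝ :=
    Pi.single i₀ fun j k => if (j : ℕ) = k then 1 else 0
  have hv (t : ℝ) (T) : block (t • v + T) = t • 1 + block T := by
    ext j k
    simp [block, v, one_apply, Fin.val_inj]
  -- along `v` the block moves by multiples of `1`, so the line through `T` meets the singular
  -- set only at the negatives of the eigenvalues of `block T`
  refine measure_eq_zero_of_forall_line_null
    ((isClosed_singleton.preimage hblock.matrix_det).measurableSet) v fun T => ?_
  refine Set.Finite.measure_zero ?_ _
  show {t : ℝ | (block (t • v + T)).det = 0}.Finite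
  simpa only [hv] using (block T).finite_setOf_det_smul_one_add_eq_zero

def HasCPDecomp {d1 d2 d3 : ℕ} (T : Fin d1 → Fin d2 → Fin d3 → ℝ) (R : ℕ) : Prop :=
  ∃ (A : Matrix (Fin d1) (Fin R) ℝ) (B : Matrix (Fin d2) (Fin R) ℝ)
    (C : Matrix (Fin d3) (Fin R) ℝ), T = cpT A B C

section CPDecomp

variable {d1 d2 d3 : ℕ}

theorem hasCPDecomp_sum_finset {M : ℕ} (A : Matrix (Fin d1) (Fin M) ℝ)
    (B : Matrix (Fin d2) (Fin M) ℝ) (C : Matrix (Fin d3) (Fin M) ℝ) (S : Finset (Fin M)) :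
    HasCPDecomp (fun i j k => ∑ r ∈ S, A i r * B j r * C k r) S.card := by
  let e := S.orderIsoOfFin rfl
  refine ⟨fun i r => A i (e r), fun j r => B j (e r), fun k r => C k (e r), ?_⟩
  funext i j k
  rw [← Finset.sum_coe_sort S]
  exact (e.toEquiv.sum_comp fun r : S => A i r * B j r * C k r).symm

theorem HasCPDecomp.add {T T' : Fin d1 → Fin d2 → Fin d3 → ℝ} {R R' : ℕ}
    (h : HasCPDecomp T R) (h' : HasCPDecomp T' R') : HasCPDecomp (T + T') (R + R') := by
  obtain ⟨A, B, C, rfl⟩ := h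
  obtain ⟨A', B', C', rfl⟩ := h'
  refine ⟨fun i => Fin.append (A i) (A' i), fun j => Fin.append (B j) (B' j),
    fun k => Fin.append (C k) (C' k), ?_⟩
  funext i j k
  simp [cpT, Fin.sum_univ_add]

theorem hasCPDecomp_mul (T : Fin d1 → Fin d2 → Fin d3 → ℝ) : HasCPDecomp T (d1 * d3) := by
  let e : Fin (d1 * d3) ≃ Fin d1 × Fin d3 := finProdFinEquiv.symm
  refine ⟨fun i r => if (e r).1 = i then 1 else 0, fun j r => T (e r).1 j (e r).2,
    fun k r => if (e r).2 = k then 1 else 0, ?_⟩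
  funext i j k
  unfold cpT
  rw [← e.symm.sum_comp]
  simp [Fintype.sum_prod_type, ite_mul]

theorem HasCPDecomp.cprank_le {T : Fin d1 → Fin d2 → Fin d3 → ℝ} {R : ℕ}
    (h : HasCPDecomp T R) : cprank T ≤ R :=
  Nat.sInf_le h

theorem hasCPDecomp_cprank (T : Fin d1 → Fin d2 → Fin d3 → ℝ) : HasCPDecomp T (cprank T) :=
  Nat.sInf_mem (s := {R | HasCPDecomp T R}) ⟨_, hasCPDecomp_mul T⟩

theorem IsTypicalRank.le_mul {R : ℕ} (h : IsTypicalRank d1 d2 d3 R) : R ≤ d1 * d3 := by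
  obtain ⟨T, rfl⟩ := nonempty_of_measure_ne_zero h.ne'
  exact (hasCPDecomp_mul T).cprank_le

theorem isTypicalRank_rtypMax (h : 0 < RtypMax d1 d2 d3) :
    IsTypicalRank d1 d2 d3 (RtypMax d1 d2 d3) := by
  have hne : {R | IsTypicalRank d1 d2 d3 R}.Nonempty := by
    by_contra he
    rw [Set.not_nonempty_iff_eq_empty] at he
    rw [RtypMax, he, csSup_empty] at h
    exact (lt_irrefl 0 h).elim
  exact Nat.sSup_mem hne ⟨d1 * d3, fun _ hR => IsTypicalRank.le_mul hR⟩

end CPDecomp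

theorem exists_not_hasCPDecomp_le_rank_slice {d1 d2 d3 R m : ℕ} (i₀ : Fin d1) (h2 : m ≤ d2)
    (h3 : m ≤ d3) (hmR : m ≤ R + 1) (hR : R < RtypMax d1 d2 d3) :
    ∃ (A : Matrix (Fin d1) (Fin (R + 1)) ℝ) (B : Matrix (Fin d2) (Fin (R + 1)) ℝ)
      (C : Matrix (Fin d3) (Fin (R + 1)) ℝ),
      ¬ HasCPDecomp (cpT A B C) R ∧ m ≤ (of (cpT A B C i₀)).rank := by
  set M := RtypMax d1 d2 d3
  have hM : IsTypicalRank d1 d2 d3 M := isTypicalRank_rtypMax (by omega)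
  set block : Matrix (Fin d2) (Fin d3) ℝ → Matrix (Fin m) (Fin m) ℝ :=
    fun X => X.submatrix (Fin.castLE h2) (Fin.castLE h3)
  obtain ⟨T, hTM, hT⟩ : ∃ T : Fin d1 → Fin d2 → Fin d3 → ℝ,
      cprank T = M ∧ (block (of (T i₀))).det ≠ 0 := by
    by_contra! h
    exact hM.ne' (measure_mono_null h (volume_det_slice_block_eq_zero i₀ h2 h3))
  obtain ⟨A, B, C, rfl⟩ := hTM ▸ hasCPDecomp_cprank T
  set u : Fin M → Fin m → ℝ := fun r j => A i₀ r * B (Fin.castLE h2 j) r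
  set v : Fin M → Fin m → ℝ := fun r k => C (Fin.castLE h3 k) r
  have hblock (S : Finset (Fin M)) :
      block (of fun j k => ∑ r ∈ S, A i₀ r * B j r * C k r) =
        ∑ r ∈ S, vecMulVec (u r) (v r) := by
    ext j k
    simp [block, u, v, Matrix.sum_apply, vecMulVec_apply]
  obtain ⟨S, -, hS, hSdet⟩ := exists_subset_card_det_sum_vecMulVec_ne_zero u v
    (W := Finset.univ) (by rw [← hblock]; exact hT) (s := R + 1) (by simpa using hmR)
    (by simpa using hR)
  obtain ⟨A', B', C', hS'⟩ := hS ▸ hasCPDecomp_sum_finset A B C S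
  refine ⟨A', B', C', fun hdec => ?_, ?_⟩
  · -- otherwise `T` would have a decomposition with `R + (M - (R + 1)) < M` terms
    have hsplit : HasCPDecomp (cpT A B C) (R + Sᶜ.card) := by
      convert (hS' ▸ hdec).add (hasCPDecomp_sum_finset A B C Sᶜ) using 1
      funext i j k
      exact (Finset.sum_add_sum_compl S _).symm
    have := hsplit.cprank_le
    rw [Finset.card_compl, hS, Fintype.card_fin] at this
    omega
  · refine le_rank_of_det_submatrix_ne_zero _ (Fin.castLE h2) (Fin.castLE h3) ?_
    rw [← hS']
    change (block (of fun j k => ∑ r ∈ S, A i₀ r * B j r * C k r)).det ≠ 0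
    rwa [hblock]

section ModeProd

variable {d1 d2 d3 : ℕ}

theorem modeProd_single_one (T : Fin d1 → Fin d2 → Fin d3 → ℝ) (i : Fin d1)
    (x : Fin d2 → ℝ) :
    modeProd T (Pi.single i 1) x = x ᵥ* of (T i) := by
  ext k
  simp [modeProd, vecMul, dotProduct, Pi.single_apply, mul_comm]

theorem modeProd_cpT {R : ℕ} (A : Matrix (Fin d1) (Fin R) ℝ) (B : Matrix (Fin d2) (Fin R) ℝ)
    (C : Matrix (Fin d3) (Fin R) ℝ) (h : Fin d1 → ℝ) (x : Fin d2 → ℝ) :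
    modeProd (cpT A B C) h x = x ᵥ* (B * diagonal (h ᵥ* A) * Cᵀ) := by
  rw [← vecMul_vecMul, ← vecMul_vecMul, vecMul_transpose]
  ext k
  simp only [mulVec, dotProduct, vecMul_diagonal]
  simp only [modeProd, cpT, vecMul, dotProduct, Finset.sum_mul, Finset.mul_sum]
  rw [Finset.sum_comm_cycle]
  exact Finset.sum_congr rfl fun r _ => Finset.sum_congr rfl fun i _ =>
    Finset.sum_congr rfl fun j _ => by ring

end ModeProd

section Network

variable {n d R R' : ℕ} {σ : ℝ → ℝ} {h0 h0' : Fin n → ℝ}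
  {A : Matrix (Fin n) (Fin R) ℝ} {B : Matrix (Fin d) (Fin R) ℝ} {C : Matrix (Fin n) (Fin R) ℝ}
  {A' : Matrix (Fin n) (Fin R') ℝ} {B' : Matrix (Fin d) (Fin R') ℝ} {C' : Matrix (Fin n) (Fin R') ℝ}

theorem cpbirnnStates_congr (hT : cpT A B C = cpT A' B' C') (x : ℕ → Fin d → ℝ) :
    cpbirnnStates σ h0 A B C x = cpbirnnStates σ h0 A' B' C' x := by
  funext t
  induction t with
  | zero => rfl
  | succ t ih => simp only [cpbirnnStates, hT, ih]

theorem HCPBIRNN_subset_succ (d n R : ℕ) (σ : ℝ → ℝ) :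
    HCPBIRNN d n R σ ⊆ HCPBIRNN d n (R + 1) σ := by
  rintro f ⟨h0, A, B, C, hf⟩
  have hpad : cpT (of fun i => Fin.snoc (A i) 0) (of fun j => Fin.snoc (B j) 0)
      (of fun k => Fin.snoc (C k) 0) = cpT A B C := by
    funext i j k
    simp [cpT, Fin.sum_univ_castSucc]
  exact ⟨h0, _, _, _, fun x t => by rw [hf, cpbirnnStates_congr hpad]⟩

theorem modeProd_eq_of_cpbirnnStates_one_eq (hσ : Function.Injective σ)
    (h : ∀ x, cpbirnnStates σ h0 A B C x 1 = cpbirnnStates σ h0' A' B' C' x 1)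
    (x₀ : Fin d → ℝ) : modeProd (cpT A B C) h0 x₀ = modeProd (cpT A' B' C') h0' x₀ :=
  funext fun k => hσ (congrFun (h fun _ => x₀) k)

theorem rank_slice_le_of_cpbirnnStates_one_eq (hσ : Function.Injective σ) (i₀ : Fin n)
    (h : ∀ x, cpbirnnStates σ (Pi.single i₀ 1) A B C x 1 = cpbirnnStates σ h0' A' B' C' x 1) :
    (of (cpT A B C i₀)).rank ≤ R' := by
  have hslice : of (cpT A B C i₀) = B' * diagonal (h0' ᵥ* A') * C'ᵀ := by
    ext j k
    have := congrFun (modeProd_eq_of_cpbirnnStates_one_eq hσ h (Pi.single j 1)) k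
    rwa [modeProd_single_one, modeProd_cpT, single_one_vecMul, single_one_vecMul] at this
  rw [hslice]
  exact (rank_mul_le_left _ _).trans (rank_le_width _)

theorem cpT_eq_of_cpbirnnStates_eq (hσ : Function.Bijective σ) (i₀ : Fin n)
    (hrank : (of (cpT A B C i₀)).rank = n)
    (h : ∀ x t, cpbirnnStates σ (Pi.single i₀ 1) A B C x (t + 1) =
      cpbirnnStates σ h0' A' B' C' x (t + 1)) :
    cpT A B C = cpT A' B' C' := by
  have hreach (g : Fin n → ℝ) :
      ∃ x₀, (fun k => σ (modeProd (cpT A B C) (Pi.single i₀ 1) x₀ k)) = g := by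
    obtain ⟨x₀, hx₀ : x₀ ᵥ* _ = _⟩ :=
      vecMul_surjective_of_rank_eq _ (by simpa using hrank) fun k => Function.surjInv hσ.2 (g k)
    refine ⟨x₀, funext fun k => ?_⟩
    rw [modeProd_single_one, hx₀]
    exact Function.surjInv_eq hσ.2 (g k)
  -- an input `x₀` leading to the state `e i`, then the input `e j`, reads off `T i j k`
  funext i j k
  obtain ⟨x₀, hx₀⟩ := hreach (Pi.single i 1)
  set x : ℕ → Fin d → ℝ := fun t => if t = 0 then x₀ else Pi.single j 1
  have hstate1 : cpbirnnStates σ h0' A' B' C' x 1 = Pi.single i 1 := (h x 0).symm.trans hx₀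
  have hstate2 := congrFun (h x 1) k
  change σ (modeProd (cpT A B C) (cpbirnnStates σ (Pi.single i₀ 1) A B C x 1) (x 1) k) =
    σ (modeProd (cpT A' B' C') (cpbirnnStates σ h0' A' B' C' x 1) (x 1) k) at hstate2
  rw [h x 0, hstate1] at hstate2
  simpa [x, modeProd_single_one] using hσ.1 hstate2

end Network

theorem cpbirnn_rank_strict_mono_general (d n R : ℕ) (hnd : n ≤ d) (σ : ℝ → ℝ)
    (hσb : Function.Bijective σ)
    (hR : R < RtypMax n d n) :
    HCPBIRNN d n R σ ⊂ HCPBIRNN d n (R + 1) σ := by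
  have hn : 0 < n := by
    have := (isTypicalRank_rtypMax (d1 := n) (d2 := d) (d3 := n) (by omega)).le_mul
    exact Nat.pos_of_ne_zero fun h => by subst h; omega
  let i₀ : Fin n := ⟨0, hn⟩
  obtain ⟨A, B, C, hnot, hrank⟩ := exists_not_hasCPDecomp_le_rank_slice i₀
    ((min_le_right (R + 1) n).trans hnd) (min_le_right (R + 1) n) (min_le_left _ _) hR
  refine Set.ssubset_def.mpr ⟨HCPBIRNN_subset_succ d n R σ, fun hsub => ?_⟩
  obtain ⟨h0', A', B', C', hf⟩ := hsub ⟨Pi.single i₀ 1, A, B, C, fun _ _ => rfl⟩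
  have hle := rank_slice_le_of_cpbirnnStates_one_eq hσb.1 i₀ fun x => hf x 0
  rcases le_total (R + 1) n with hRn | hnR
  · omega
  · have hfull : (of (cpT A B C i₀)).rank = n := le_antisymm (rank_le_width _) (by omega)
    exact hnot ⟨A', B', C', cpT_eq_of_cpbirnnStates_eq hσb i₀ hfull hf⟩

/-- If `n ≤ d`, `σ` is real analytic and bijective, then for every
`R < R_typ-max(n,d,n)`, `H_CPBIRNN(R,n) ⊊ H_CPBIRNN(R+1,n)`. -/
theorem cpbirnn_rank_strict_mono (d n R : ℕ) (hnd : n ≤ d) (σ : ℝ → ℝ)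
    (hσa : AnalyticOn ℝ σ Set.univ) (hσb : Function.Bijective σ)
    (hR : R < RtypMax n d n) :
    HCPBIRNN d n R σ ⊂ HCPBIRNN d n (R + 1) σ :=
  cpbirnn_rank_strict_mono_general d n R hnd σ hσb hR
end

section
/- Assume n ≤ d and take the linear activation σ = identity. Then for every R < R_typ-max(n,d,n), the inclusion H_CPRNN(R,n) ⊊ H_CPRNN(R+1,n) is strict (both sides taken with the same d and with linear activation). -/
open Matrix MeasureTheory

/-! A tensor `T` of CP rank exactly `R + 1` exists, because dropping one rank-one term lowers
the CP rank by at most one, so every rank below a typical one is attained. Run the linear CPRNN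
with tensor `T`, `h⁰ = 0`, `V = 0`, `b = 0` and a surjective input map `U` (possible as `n ≤ d`):
then `h¹ = U x¹` and `h² = T ×₁ U x¹ ×₂ x² + U x²`. A linear CPRNN of rank `R` with the same first
two states has a tensor `T'` with `T(u, w) = T'(u, w) + (a function of u) + (a function of w)`
for all `u, w`; evaluating at `u = 0` or `w = 0` kills both extra terms, so `T = T'` and
`rank_CP T ≤ R`. -/

namespace CPRNN

section Tensor

variable {d1 d2 d3 : ℕ}

theorem exists_eq_cpT (T : Fin d1 → Fin d2 → Fin d3 → ℝ) :
    ∃ (A : Matrix (Fin d1) (Fin (d1 * d2)) ℝ) (B : Matrix (Fin d2) (Fin (d1 * d2)) ℝ)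
      (C : Matrix (Fin d3) (Fin (d1 * d2)) ℝ), T = cpT A B C := by
  let e := (finProdFinEquiv (m := d1) (n := d2)).symm
  refine ⟨fun i r => if (e r).1 = i then 1 else 0, fun j r => if (e r).2 = j then 1 else 0,
    fun k r => T (e r).1 (e r).2 k, ?_⟩
  funext i j k
  simp only [cpT]
  rw [← e.symm.sum_comp, Fintype.sum_prod_type]
  simp [ite_mul, Finset.sum_ite_eq']

theorem cprank_le_of_eq_cpT {R : ℕ} {T : Fin d1 → Fin d2 → Fin d3 → ℝ}
    {A : Matrix (Fin d1) (Fin R) ℝ} {B : Matrix (Fin d2) (Fin R) ℝ}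
    {C : Matrix (Fin d3) (Fin R) ℝ} (h : T = cpT A B C) : cprank T ≤ R :=
  Nat.sInf_le ⟨A, B, C, h⟩

theorem cprank_le_mul (T : Fin d1 → Fin d2 → Fin d3 → ℝ) : cprank T ≤ d1 * d2 :=
  let ⟨_, _, _, h⟩ := exists_eq_cpT T
  cprank_le_of_eq_cpT h

theorem exists_eq_cpT_cprank (T : Fin d1 → Fin d2 → Fin d3 → ℝ) :
    ∃ (A : Matrix (Fin d1) (Fin (cprank T)) ℝ) (B : Matrix (Fin d2) (Fin (cprank T)) ℝ)
      (C : Matrix (Fin d3) (Fin (cprank T)) ℝ), T = cpT A B C :=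
  Nat.sInf_mem (s := {R | ∃ (A : Matrix (Fin d1) (Fin R) ℝ) (B : Matrix (Fin d2) (Fin R) ℝ)
    (C : Matrix (Fin d3) (Fin R) ℝ), T = cpT A B C}) ⟨d1 * d2, exists_eq_cpT T⟩

theorem exists_eq_cpT_of_cprank_eq {R : ℕ} {T : Fin d1 → Fin d2 → Fin d3 → ℝ}
    (hT : cprank T = R) :
    ∃ (A : Matrix (Fin d1) (Fin R) ℝ) (B : Matrix (Fin d2) (Fin R) ℝ)
      (C : Matrix (Fin d3) (Fin R) ℝ), T = cpT A B C :=
  hT ▸ exists_eq_cpT_cprank T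

theorem cpT_snoc {R : ℕ} (A : Matrix (Fin d1) (Fin R) ℝ) (B : Matrix (Fin d2) (Fin R) ℝ)
    (C : Matrix (Fin d3) (Fin R) ℝ) (a : Fin d1 → ℝ) (b : Fin d2 → ℝ) (c : Fin d3 → ℝ) :
    cpT (fun i => Fin.snoc (A i) (a i)) (fun j => Fin.snoc (B j) (b j))
      (fun k => Fin.snoc (C k) (c k)) = cpT A B C + fun i j k => a i * b j * c k := by
  funext i j k
  simp [cpT, Fin.sum_univ_castSucc]

theorem cprank_cpT_snoc_le {R : ℕ} (A : Matrix (Fin d1) (Fin R) ℝ)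
    (B : Matrix (Fin d2) (Fin R) ℝ) (C : Matrix (Fin d3) (Fin R) ℝ)
    (a : Fin d1 → ℝ) (b : Fin d2 → ℝ) (c : Fin d3 → ℝ) :
    cprank (cpT (fun i => Fin.snoc (A i) (a i)) (fun j => Fin.snoc (B j) (b j))
      (fun k => Fin.snoc (C k) (c k))) ≤ cprank (cpT A B C) + 1 := by
  obtain ⟨A', B', C', h⟩ := exists_eq_cpT_cprank (cpT A B C)
  refine cprank_le_of_eq_cpT (A := fun i => Fin.snoc (A' i) (a i))
    (B := fun j => Fin.snoc (B' j) (b j)) (C := fun k => Fin.snoc (C' k) (c k)) ?_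
  rw [cpT_snoc, cpT_snoc, ← h]

theorem exists_cprank_eq_of_cprank_eq_succ {m : ℕ} {T : Fin d1 → Fin d2 → Fin d3 → ℝ}
    (hT : cprank T = m + 1) : ∃ S : Fin d1 → Fin d2 → Fin d3 → ℝ, cprank S = m := by
  obtain ⟨A, B, C, rfl⟩ := exists_eq_cpT_of_cprank_eq hT
  refine ⟨cpT (fun i => Fin.init (A i)) (fun j => Fin.init (B j)) (fun k => Fin.init (C k)),
    le_antisymm (cprank_le_of_eq_cpT rfl) ?_⟩
  have := cprank_cpT_snoc_le (fun i => Fin.init (A i)) (fun j => Fin.init (B j))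
    (fun k => Fin.init (C k)) (fun i => A i (Fin.last m)) (fun j => B j (Fin.last m))
    (fun k => C k (Fin.last m))
  simp only [Fin.snoc_init_self] at this
  exact Nat.le_of_succ_le_succ (hT.symm.trans_le this)

theorem exists_cprank_eq_of_le {k m : ℕ} (hkm : k ≤ m)
    (h : ∃ T : Fin d1 → Fin d2 → Fin d3 → ℝ, cprank T = m) :
    ∃ S : Fin d1 → Fin d2 → Fin d3 → ℝ, cprank S = k := by
  induction m, hkm using Nat.le_induction with
  | base => exact h
  | succ m _ ih =>
    obtain ⟨T, hT⟩ := h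
    exact ih (exists_cprank_eq_of_cprank_eq_succ hT)

theorem IsTypicalRank.exists_cprank_eq {R : ℕ} (h : IsTypicalRank d1 d2 d3 R) :
    ∃ T : Fin d1 → Fin d2 → Fin d3 → ℝ, cprank T = R :=
  nonempty_of_measure_ne_zero h.ne'

theorem isTypicalRank_RtypMax (h : 0 < RtypMax d1 d2 d3) :
    IsTypicalRank d1 d2 d3 (RtypMax d1 d2 d3) := by
  refine Nat.sSup_mem (s := {R | IsTypicalRank d1 d2 d3 R})
    (Set.nonempty_iff_ne_empty.2 fun he => ?_) ⟨d1 * d2, fun R hR => ?_⟩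
  · simp [RtypMax, he] at h
  · obtain ⟨T, rfl⟩ := IsTypicalRank.exists_cprank_eq hR
    exact cprank_le_mul T

theorem exists_cprank_eq_of_le_RtypMax {k : ℕ} (hk : 0 < k) (hkR : k ≤ RtypMax d1 d2 d3) :
    ∃ T : Fin d1 → Fin d2 → Fin d3 → ℝ, cprank T = k :=
  exists_cprank_eq_of_le hkR
    (IsTypicalRank.exists_cprank_eq (isTypicalRank_RtypMax (hk.trans_le hkR)))

@[simp]
theorem modeProd_zero_left (T : Fin d1 → Fin d2 → Fin d3 → ℝ) (v : Fin d2 → ℝ) :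
    modeProd T 0 v = 0 := by
  funext k
  simp [modeProd]

@[simp]
theorem modeProd_zero_right (T : Fin d1 → Fin d2 → Fin d3 → ℝ) (u : Fin d1 → ℝ) :
    modeProd T u 0 = 0 := by
  funext k
  simp [modeProd]

theorem modeProd_single_single (T : Fin d1 → Fin d2 → Fin d3 → ℝ) (i : Fin d1) (j : Fin d2) :
    modeProd T (Pi.single i 1) (Pi.single j 1) = T i j := by
  funext k
  simp [modeProd, Pi.single_apply]

theorem eq_of_modeProd_eq {S T : Fin d1 → Fin d2 → Fin d3 → ℝ}
    (h : ∀ u v, modeProd S u v = modeProd T u v) : S = T := by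
  funext i j
  rw [← modeProd_single_single S, ← modeProd_single_single T, h]

theorem eq_of_modeProd_eq_add {S T : Fin d1 → Fin d2 → Fin d3 → ℝ}
    (f : (Fin d1 → ℝ) → Fin d3 → ℝ) (g : (Fin d2 → ℝ) → Fin d3 → ℝ)
    (h : ∀ u v, modeProd S u v = modeProd T u v + f u + g v) : S = T := by
  refine eq_of_modeProd_eq fun u v => ?_
  have hu := h u 0
  have hv := h 0 v
  have h0 := h 0 0
  simp only [modeProd_zero_left, modeProd_zero_right, zero_add] at hu hv h0
  rw [h u v]
  linear_combination -hu - hv + h0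

end Tensor

section Network

variable {n d : ℕ}

theorem cprnnStates_id_succ {R : ℕ} (h0 : Fin n → ℝ) (A : Matrix (Fin n) (Fin R) ℝ)
    (B : Matrix (Fin d) (Fin R) ℝ) (C : Matrix (Fin n) (Fin R) ℝ) (U : Matrix (Fin n) (Fin d) ℝ)
    (V : Matrix (Fin n) (Fin n) ℝ) (b : Fin n → ℝ) (x : ℕ → Fin d → ℝ) (t : ℕ) :
    cprnnStates id h0 A B C U V b x (t + 1) =
      modeProd (cpT A B C) (cprnnStates id h0 A B C U V b x t) (x t)
        + V *ᵥ cprnnStates id h0 A B C U V b x t + U *ᵥ x t + b :=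
  rfl

theorem cprnnStates_congr_cpT {R R' : ℕ} (σ : ℝ → ℝ) (h0 : Fin n → ℝ)
    {A : Matrix (Fin n) (Fin R) ℝ} {B : Matrix (Fin d) (Fin R) ℝ} {C : Matrix (Fin n) (Fin R) ℝ}
    {A' : Matrix (Fin n) (Fin R') ℝ} {B' : Matrix (Fin d) (Fin R') ℝ}
    {C' : Matrix (Fin n) (Fin R') ℝ} (U : Matrix (Fin n) (Fin d) ℝ) (V : Matrix (Fin n) (Fin n) ℝ)
    (b : Fin n → ℝ) (hc : cpT A B C = cpT A' B' C') (x : ℕ → Fin d → ℝ) (t : ℕ) :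
    cprnnStates σ h0 A B C U V b x t = cprnnStates σ h0 A' B' C' U V b x t := by
  induction t with
  | zero => rfl
  | succ t ih => simp only [cprnnStates, ih, hc]

theorem HCPRNN_subset_succ (R : ℕ) (σ : ℝ → ℝ) : HCPRNN d n R σ ⊆ HCPRNN d n (R + 1) σ := by
  rintro f ⟨h0, A, B, C, U, V, b, hf⟩
  refine ⟨h0, fun i => Fin.snoc (A i) 0, fun j => Fin.snoc (B j) 0, fun k => Fin.snoc (C k) 0,
    U, V, b, fun x t => ?_⟩
  refine (hf x t).trans (cprnnStates_congr_cpT σ h0 U V b ?_ x _)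
  rw [cpT_snoc]
  funext i j k
  simp

theorem exists_mulVec_surjective (hnd : n ≤ d) :
    ∃ U : Matrix (Fin n) (Fin d) ℝ, Function.Surjective U.mulVec := by
  refine ⟨(1 : Matrix (Fin d) (Fin d) ℝ).submatrix (Fin.castLE hnd) id, fun u => ?_⟩
  obtain ⟨x, rfl⟩ := (Fin.castLE_injective hnd).surjective_comp_right u
  refine ⟨x, funext fun k => ?_⟩
  simp [Matrix.mulVec, dotProduct, Matrix.one_apply]

theorem exists_cpT_eq_of_mem_HCPRNN {R R' : ℕ} (A : Matrix (Fin n) (Fin R) ℝ)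
    (B : Matrix (Fin d) (Fin R) ℝ) (C : Matrix (Fin n) (Fin R) ℝ) {U : Matrix (Fin n) (Fin d) ℝ}
    (hU : Function.Surjective U.mulVec)
    (h : (fun x t => cprnnStates id 0 A B C U 0 0 x (t + 1)) ∈ HCPRNN d n R' id) :
    ∃ (A' : Matrix (Fin n) (Fin R') ℝ) (B' : Matrix (Fin d) (Fin R') ℝ)
      (C' : Matrix (Fin n) (Fin R') ℝ), cpT A B C = cpT A' B' C' := by
  obtain ⟨h0, A', B', C', U', V', b, hf⟩ := h
  beta_reduce at hf
  refine ⟨A', B', C', eq_of_modeProd_eq_add (fun u => V' *ᵥ u + b) (fun w => U' *ᵥ w - U *ᵥ w)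
    fun u w => ?_⟩
  obtain ⟨v, rfl⟩ := hU u
  let x : ℕ → Fin d → ℝ := fun t => if t = 0 then v else w
  have h1 : cprnnStates id h0 A' B' C' U' V' b x 1 = U *ᵥ v := by
    rw [← hf x 0, cprnnStates_id_succ]
    simp [x, cprnnStates.eq_1]
  have h2 := hf x 1
  rw [cprnnStates_id_succ _ _ _ _ U' V' b x 1, h1, cprnnStates_id_succ, cprnnStates_id_succ] at h2
  simp only [x, cprnnStates, ↓reduceIte, one_ne_zero, modeProd_zero_left, mulVec_zero,
    zero_mulVec, add_zero, zero_add] at h2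
  linear_combination h2

end Network

end CPRNN

open CPRNN in
/-- If `n ≤ d` and the activation is linear (identity), then for every
`R < R_typ-max(n,d,n)`, `H_CPRNN(R,n) ⊊ H_CPRNN(R+1,n)`. -/
theorem cprnn_rank_strict_mono_linear (d n R : ℕ) (hnd : n ≤ d)
    (hR : R < RtypMax n d n) :
    HCPRNN d n R id ⊂ HCPRNN d n (R + 1) id := by
  refine Set.ssubset_iff_subset_ne.2 ⟨HCPRNN_subset_succ R id, fun heq => ?_⟩
  obtain ⟨T, hT⟩ := exists_cprank_eq_of_le_RtypMax (d1 := n) (d2 := d) (d3 := n)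
    R.succ_pos hR
  obtain ⟨A, B, C, rfl⟩ := exists_eq_cpT_of_cprank_eq hT
  obtain ⟨U, hU⟩ := exists_mulVec_surjective hnd
  obtain ⟨A', B', C', hc⟩ := exists_cpT_eq_of_mem_HCPRNN A B C hU
    (by rw [heq]; exact ⟨0, A, B, C, U, 0, 0, fun _ _ => rfl⟩)
  exact absurd (cprank_le_of_eq_cpT hc) (by omega)
end

section
/- Let U be a connected open subset of ℝ^d and let f : U → ℝ be a real analytic function that is not identically zero on U. Then the zero set Z(f) = {x ∈ U : f(x) = 0} has Lebesgue measure zero. -/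
open Matrix MeasureTheory

/-!
Near a point `x₀` where `f` is not locally zero, its Taylor series shows that some directional
derivative `D_v^k f (x₀)` is nonzero, hence nonzero on a closed ball `B` around `x₀`. On every line
parallel to `v`, the restriction of `f` is then an analytic function of one variable that is not
locally zero at any point of `B`, so its zeros in `B` are isolated and thus countable. Since the
translates of `Z(f) ∩ B` along `v` all have the same measure, Fubini's theorem makes `Z(f) ∩ B`
null. By the identity theorem `f` is nowhere locally zero on the connected set `U`, and second
countability turns the local statement into the global one.
-/

open Filter Topology Set

theorem Set.Countable.of_forall_eventually_notMem {X : Type*} [TopologicalSpace X]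
    [HereditarilyLindelofSpace X] {S : Set X} (h : ∀ x ∈ S, ∀ᶠ y in 𝓝[≠] x, y ∉ S) :
    S.Countable :=
  (HereditarilyLindelofSpace.isLindelof S).countable_of_isDiscrete <|
    isDiscrete_iff_nhdsNE.mpr fun x hx => inf_principal_eq_bot.mpr (h x hx)

theorem ContDiffOn.iteratedDeriv_comp_add_smul {𝕜 E F : Type*} [NontriviallyNormedField 𝕜]
    [NormedAddCommGroup E] [NormedSpace 𝕜 E] [NormedAddCommGroup F] [NormedSpace 𝕜 F]
    {f : E → F} {U : Set E} (hU : IsOpen U) {k : ℕ} (hf : ContDiffOn 𝕜 k f U) {x y : E} {t : 𝕜}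
    (ht : x + t • y ∈ U) :
    iteratedDeriv k (fun s => f (x + s • y)) t = iteratedFDeriv 𝕜 k f (x + t • y) (fun _ => y) := by
  induction k generalizing t with
  | zero => simp
  | succ k ih =>
    have hline : ∀ᶠ s in 𝓝 t, x + s • y ∈ U :=
      (continuous_const.add (continuous_id.smul continuous_const)).continuousAt.preimage_mem_nhds
        (hU.mem_nhds ht)
    have heq : iteratedDeriv k (fun s => f (x + s • y)) =ᶠ[𝓝 t]
        fun s => iteratedFDeriv 𝕜 k f (x + s • y) (fun _ => y) := by
      filter_upwards [hline] with s hs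
      exact ih (hf.of_le (by norm_cast; omega)) hs
    rw [iteratedDeriv_succ, heq.deriv_eq]
    exact (hf.contDiffAt (hU.mem_nhds ht)).deriv_fderiv_add_smul

theorem AnalyticAt.exists_iteratedFDeriv_apply_ne_zero {𝕜 E F : Type*} [NontriviallyNormedField 𝕜]
    [CharZero 𝕜] [NormedAddCommGroup E] [NormedSpace 𝕜 E] [NormedAddCommGroup F]
    [NormedSpace 𝕜 F] [CompleteSpace F] {f : E → F} {x : E} (hf : AnalyticAt 𝕜 f x)
    (h : ¬ f =ᶠ[𝓝 x] 0) :
    ∃ k y, iteratedFDeriv 𝕜 k f x (fun _ => y) ≠ 0 := by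
  obtain ⟨p, r, hp⟩ := hf
  obtain ⟨z, hfz, hz⟩ := ((Filter.not_eventually.mp h).and_eventually
    (Metric.eball_mem_nhds x hp.r_pos)).exists
  by_contra! hzero
  have hsum := hp.hasSum_iteratedFDeriv (y := z - x) (by simpa [edist_eq_enorm_sub] using hz)
  simp only [hzero, smul_zero, add_sub_cancel] at hsum
  exact hfz (hsum.unique hasSum_zero)

section RealNormedSpace

variable {E F : Type*} [NormedAddCommGroup E] [NormedSpace ℝ E] [NormedAddCommGroup F]
  [NormedSpace ℝ F] {U : Set E} {f : E → F}

theorem AnalyticOnNhd.countable_setOf_line_zero (hU : IsOpen U) (hf : AnalyticOnNhd ℝ f U)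
    (k : ℕ) (x v : E) :
    {t : ℝ | x + t • v ∈ U ∧ iteratedFDeriv ℝ k f (x + t • v) (fun _ => v) ≠ 0 ∧
      f (x + t • v) = 0}.Countable := by
  refine Set.Countable.of_forall_eventually_notMem fun t ⟨htU, hD, _⟩ => ?_
  have hline : AnalyticAt ℝ (fun s : ℝ => f (x + s • v)) t :=
    (hf _ htU).comp_of_eq (by fun_prop) rfl
  have hne : ¬ (fun s : ℝ => f (x + s • v)) =ᶠ[𝓝 t] 0 := fun h0 => hD <| by
    rw [← (hf.contDiffOn hU.uniqueDiffOn (n := k)).iteratedDeriv_comp_add_smul hU htU,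
      h0.iteratedDeriv_eq]
    simp
  filter_upwards [hline.eventually_eq_zero_or_eventually_ne_zero.resolve_left hne] with s hs
  exact fun h => hs h.2.2

variable [MeasurableSpace E] [BorelSpace E] [SecondCountableTopology E] (μ : Measure E) [SFinite μ]
  [μ.IsAddRightInvariant]

theorem measure_eq_zero_of_forall_line_null_s14 {S : Set E} (hS : MeasurableSet S) (v : E)
    (h : ∀ x, volume {t : ℝ | x + t • v ∈ S} = 0) :
    μ S = 0 := by
  set P : Set (E × ℝ) := (fun p => p.1 + p.2 • v) ⁻¹' S
  have hP : MeasurableSet P := (by fun_prop : Measurable fun p : E × ℝ => p.1 + p.2 • v) hS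
  have hsections : μ.prod volume P = μ S * volume (univ : Set ℝ) := by
    rw [Measure.prod_apply_symm hP, ← lintegral_const]
    congr 1 with t
    exact measure_preimage_add_right μ (t • v) S
  have hnull : μ.prod volume P = 0 := (Measure.measure_prod_null hP).mpr (ae_of_all _ h)
  simpa [hnull, eq_comm] using hsections

variable [CompleteSpace F]

theorem AnalyticOnNhd.exists_mem_nhds_measure_setOf_eq_zero (hU : IsOpen U)
    (hf : AnalyticOnNhd ℝ f U) {x₀ : E} (hx₀ : x₀ ∈ U) (h : ¬ f =ᶠ[𝓝 x₀] 0) :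
    ∃ B ∈ 𝓝 x₀, μ {x ∈ B | f x = 0} = 0 := by
  obtain ⟨k, v, hkv⟩ := (hf x₀ hx₀).exists_iteratedFDeriv_apply_ne_zero h
  have hD : ∀ᶠ x in 𝓝 x₀, x ∈ U ∧ iteratedFDeriv ℝ k f x (fun _ => v) ≠ 0 :=
    Filter.Eventually.and (hU.mem_nhds hx₀) <|
      ((continuous_eval_const _).continuousAt.comp
        (hf.iteratedFDeriv k x₀ hx₀).continuousAt).eventually_ne hkv
  obtain ⟨ε, hε, hball⟩ := Metric.nhds_basis_closedBall.eventually_iff.mp hD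
  refine ⟨Metric.closedBall x₀ ε, Metric.closedBall_mem_nhds x₀ hε, ?_⟩
  have hclosed : IsClosed {x ∈ Metric.closedBall x₀ ε | f x = 0} :=
    (hf.continuousOn.mono fun x hx => (hball hx).1).preimage_isClosed_of_isClosed
      Metric.isClosed_closedBall isClosed_singleton
  refine measure_eq_zero_of_forall_line_null_s14 μ hclosed.measurableSet v fun x => ?_
  refine Countable.measure_zero ((hf.countable_setOf_line_zero hU k x v).mono ?_) _
  exact fun t ⟨hB, hzero⟩ => ⟨(hball hB).1, (hball hB).2, hzero⟩

theorem AnalyticOnNhd.measure_setOf_eq_zero_eq_zero (hU : IsOpen U) (hUc : IsPreconnected U)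
    (hf : AnalyticOnNhd ℝ f U) (hne : ∃ x ∈ U, f x ≠ 0) :
    μ {x ∈ U | f x = 0} = 0 := by
  obtain ⟨x₁, hx₁, hfx₁⟩ := hne
  refine measure_null_of_locally_null _ fun x₀ hx₀ => ?_
  have h : ¬ f =ᶠ[𝓝 x₀] 0 := fun h0 =>
    hfx₁ (hf.eqOn_zero_of_preconnected_of_eventuallyEq_zero hUc hx₀.1 h0 hx₁)
  obtain ⟨B, hB, hnull⟩ := hf.exists_mem_nhds_measure_setOf_eq_zero μ hU hx₀.1 h
  refine ⟨_, inter_mem_nhdsWithin _ hB, measure_mono_null ?_ hnull⟩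
  exact fun x hx => ⟨hx.2, hx.1.2⟩

end RealNormedSpace

/-- the zero set of a real analytic function on a connected open subset
of `ℝ^d` which is not identically zero has Lebesgue measure zero. -/
theorem zero_set_analytic_measure_zero (d : ℕ) (U : Set (Fin d → ℝ)) (hU : IsOpen U)
    (hUc : IsConnected U) (f : (Fin d → ℝ) → ℝ) (hf : AnalyticOn ℝ f U)
    (hne : ∃ x ∈ U, f x ≠ 0) :
    volume {x ∈ U | f x = 0} = 0 :=
  (hU.analyticOn_iff_analyticOnNhd.mp hf).measure_setOf_eq_zero_eq_zero volume hU
    hUc.isPreconnected hne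
end

section
/- Let h⁰ ∈ ℝ^n, A, C ∈ ℝ^{n×R}, B ∈ ℝ^{d×R} be parameters of a CPBIRNN with activation σ : ℝ → ℝ, and define the second pre-activation map a₂(x¹,x²) = [[A,B,C]] ×₁ σ([[A,B,C]] ×₁ h⁰ ×₂ x¹) ×₂ x² ∈ ℝ^n. Define the tensor S ∈ ℝ^{d×d×n} by S_{ijk} = [a₂(e_i,e_j)]_k, where e_i is the i-th standard basis vector of ℝ^d. Then S = [[σ(B diag(Aᵀh⁰) Cᵀ) A, B, C]], where σ is applied entrywise to the matrix B diag(Aᵀh⁰) Cᵀ and diag(v) is the diagonal matrix with diagonal v; consequently rank_CP(S) ≤ rank_CP([[A,B,C]]) ≤ R. -/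
open Matrix MeasureTheory

/-!
With a one-hot first input `e_i`, the first pre-activation `[[A,B,C]] ×₁ h⁰ ×₂ e_i` is the
`i`-th row of `B diag(Aᵀh⁰) Cᵀ`. Contracting `[[A,B,C]]` along its first mode with the rows of
`M = σ(B diag(Aᵀh⁰) Cᵀ)` multiplies the first factor of every CP decomposition of `[[A,B,C]]`
by `M`, so `S = [[M A, B, C]]`, and a minimal decomposition of `[[A,B,C]]` yields one of `S`.
-/

open Finset

section CPTensor

variable {d1 d2 d3 R : ℕ}

theorem cpT_mul_left_apply {m : ℕ} (M : Matrix (Fin d1) (Fin m) ℝ)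
    (A : Matrix (Fin m) (Fin R) ℝ) (B : Matrix (Fin d2) (Fin R) ℝ)
    (C : Matrix (Fin d3) (Fin R) ℝ) (i : Fin d1) (j : Fin d2) (k : Fin d3) :
    cpT (M * A) B C i j k = ∑ l, M i l * cpT A B C l j k := by
  simp only [cpT, mul_apply, sum_mul, mul_sum]
  rw [sum_comm]
  refine sum_congr rfl fun l _ => sum_congr rfl fun r _ => ?_
  ring

theorem cprank_cpT_le (A : Matrix (Fin d1) (Fin R) ℝ) (B : Matrix (Fin d2) (Fin R) ℝ)
    (C : Matrix (Fin d3) (Fin R) ℝ) : cprank (cpT A B C) ≤ R :=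
  Nat.sInf_le ⟨A, B, C, rfl⟩

theorem exists_cpT_eq_of_cprank (A : Matrix (Fin d1) (Fin R) ℝ)
    (B : Matrix (Fin d2) (Fin R) ℝ) (C : Matrix (Fin d3) (Fin R) ℝ) :
    ∃ (A' : Matrix (Fin d1) (Fin (cprank (cpT A B C))) ℝ)
      (B' : Matrix (Fin d2) (Fin (cprank (cpT A B C))) ℝ)
      (C' : Matrix (Fin d3) (Fin (cprank (cpT A B C))) ℝ), cpT A B C = cpT A' B' C' :=
  Nat.sInf_mem (s := {r | ∃ (A' : Matrix _ (Fin r) ℝ) (B' : Matrix _ (Fin r) ℝ)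
    (C' : Matrix _ (Fin r) ℝ), cpT A B C = cpT A' B' C'}) ⟨R, A, B, C, rfl⟩

theorem cpT_mul_left_congr {m R' : ℕ} (M : Matrix (Fin d1) (Fin m) ℝ)
    {A : Matrix (Fin m) (Fin R) ℝ} {B : Matrix (Fin d2) (Fin R) ℝ} {C : Matrix (Fin d3) (Fin R) ℝ}
    {A' : Matrix (Fin m) (Fin R') ℝ} {B' : Matrix (Fin d2) (Fin R') ℝ}
    {C' : Matrix (Fin d3) (Fin R') ℝ} (h : cpT A B C = cpT A' B' C') :
    cpT (M * A) B C = cpT (M * A') B' C' := by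
  funext i j k
  rw [cpT_mul_left_apply, cpT_mul_left_apply, h]

theorem cprank_cpT_mul_left_le {m : ℕ} (M : Matrix (Fin d1) (Fin m) ℝ)
    (A : Matrix (Fin m) (Fin R) ℝ) (B : Matrix (Fin d2) (Fin R) ℝ)
    (C : Matrix (Fin d3) (Fin R) ℝ) :
    cprank (cpT (M * A) B C) ≤ cprank (cpT A B C) := by
  obtain ⟨A', B', C', h⟩ := exists_cpT_eq_of_cprank A B C
  exact cpT_mul_left_congr M h ▸ cprank_cpT_le (M * A') B' C'

theorem modeProd_single_right (T : Fin d1 → Fin d2 → Fin d3 → ℝ) (u : Fin d1 → ℝ)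
    (j : Fin d2) (k : Fin d3) :
    modeProd T u (Pi.single j 1) k = ∑ i, T i j k * u i := by
  refine sum_congr rfl fun i _ => ?_
  rw [sum_eq_single j (fun b _ hb => by simp [hb]) (by simp)]
  simp

theorem modeProd_cpT_single_right (A : Matrix (Fin d1) (Fin R) ℝ)
    (B : Matrix (Fin d2) (Fin R) ℝ) (C : Matrix (Fin d3) (Fin R) ℝ) (u : Fin d1 → ℝ)
    (j : Fin d2) :
    modeProd (cpT A B C) u (Pi.single j 1) = (B * diagonal (Aᵀ *ᵥ u) * Cᵀ) j := by
  funext k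
  simp only [modeProd_single_right, cpT, mul_apply, diagonal_apply, transpose_apply, mulVec,
    dotProduct, mul_ite, mul_zero, sum_ite_eq', mem_univ, if_true, sum_mul, mul_sum]
  rw [sum_comm]
  refine sum_congr rfl fun r _ => sum_congr rfl fun i _ => ?_
  ring

end CPTensor

/-- the tensor `S` collecting the second pre-activations of a CPBIRNN on
length-2 one-hot sequences satisfies `S = [[σ(B diag(Aᵀh⁰) Cᵀ) A, B, C]]`, hence
`rank_CP(S) ≤ rank_CP([[A,B,C]]) ≤ R`. -/
theorem second_preactivation_tensor_cp {n d R : ℕ} (σ : ℝ → ℝ) (h0 : Fin n → ℝ)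
    (A : Matrix (Fin n) (Fin R) ℝ) (B : Matrix (Fin d) (Fin R) ℝ)
    (C : Matrix (Fin n) (Fin R) ℝ)
    (a2 : (Fin d → ℝ) → (Fin d → ℝ) → Fin n → ℝ)
    (ha2 : ∀ x1 x2, a2 x1 x2 =
      modeProd (cpT A B C) (fun l => σ (modeProd (cpT A B C) h0 x1 l)) x2)
    (S : Fin d → Fin d → Fin n → ℝ)
    (hS : ∀ i j k, S i j k = a2 (Pi.single i 1) (Pi.single j 1) k) :
    S = cpT (((B * Matrix.diagonal (Aᵀ.mulVec h0) * Cᵀ).map σ) * A) B C ∧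
    cprank S ≤ cprank (cpT A B C) ∧ cprank (cpT A B C) ≤ R := by
  have hS_eq : S = cpT (((B * Matrix.diagonal (Aᵀ.mulVec h0) * Cᵀ).map σ) * A) B C := by
    funext i j k
    rw [hS, ha2, modeProd_single_right, cpT_mul_left_apply, modeProd_cpT_single_right]
    exact sum_congr rfl fun l _ => mul_comm _ _
  exact ⟨hS_eq, hS_eq ▸ cprank_cpT_mul_left_le _ A B C, cprank_cpT_le A B C⟩
end
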